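/- arXiv:2410.10485 — 2 statements merged into one kernel-verified Lean document; each statement's English description precedes it below -/
import Mathlib

section
/- The dual total correlation decomposes as DTC(X) = Σ_{k=1}^{n−1} k·u_k(X). -/
open MeasureTheory Finset

noncomputable section

variable {Ω : Type*} [MeasurableSpace Ω]

/-- Shannon entropy of a finite-valued random variable `Z` under the measure `μ`
(with the convention that the entropy of an empty tuple is `negMulLog (μ univ) = 0`
for a probability measure). -/
def ent {α : Type*} [Fintype α] (μ : Measure Ω) (Z : Ω → α) : ℝ :=
  ∑ z : α, Real.negMulLog ((μ (Z ⁻¹' {z})).toReal)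

/-- Conditional entropy `H(A | B)`. -/
def condEnt {α β : Type*} [Fintype α] [Fintype β] (μ : Measure Ω)
    (A : Ω → α) (B : Ω → β) : ℝ :=
  ent μ (fun ω => (A ω, B ω)) - ent μ B

/-- Mutual information `I(A ; B)`. -/
def mi {α β : Type*} [Fintype α] [Fintype β] (μ : Measure Ω)
    (A : Ω → α) (B : Ω → β) : ℝ :=
  ent μ A + ent μ B - ent μ (fun ω => (A ω, B ω))

/-- Conditional mutual information `I(A ; B | C)`. -/
def cmi {α β γ : Type*} [Fintype α] [Fintype β] [Fintype γ] (μ : Measure Ω)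
    (A : Ω → α) (B : Ω → β) (C : Ω → γ) : ℝ :=
  ent μ (fun ω => (A ω, C ω)) + ent μ (fun ω => (B ω, C ω))
    - ent μ (fun ω => (A ω, B ω, C ω)) - ent μ C

/-- The sub-tuple `X^a = (X_i)_{i ∈ a}` of the random vector `X = (X_1, …, X_n)`. -/
def restr {n : ℕ} {S : Type*} (X : Fin n → Ω → S) (a : Finset (Fin n)) :
    Ω → (a → S) :=
  fun ω i => X i.1 ω

/-- Average subset entropy `r_k(X) = C(n,k)⁻¹ ∑_{|a| = k} H(X^a)`. -/
def rE {n : ℕ} {S : Type*} [Fintype S] (μ : Measure Ω) (X : Fin n → Ω → S) (k : ℕ) : ℝ :=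
  ((n.choose k : ℝ))⁻¹ *
    ∑ a ∈ univ.powerset.filter (fun a : Finset (Fin n) => a.card = k), ent μ (restr X a)

/-- Average conditional pairwise mutual information
`u_k(X) = (C(n,k+1) C(k+1,2))⁻¹ ∑_{i<j} ∑_{|a| = k-1, i,j ∉ a} I(X_i ; X_j | X^a)`. -/
def uI {n : ℕ} {S : Type*} [Fintype S] (μ : Measure Ω) (X : Fin n → Ω → S) (k : ℕ) : ℝ :=
  ((n.choose (k + 1) : ℝ) * ((k + 1).choose 2 : ℝ))⁻¹ *
    ∑ p ∈ univ.filter (fun p : Fin n × Fin n => p.1 < p.2),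
      ∑ a ∈ (univ \ ({p.1, p.2} : Finset (Fin n))).powerset.filter
          (fun a : Finset (Fin n) => a.card = k - 1),
        cmi μ (X p.1) (X p.2) (restr X a)

/-!
Write `r_k` for the average entropy of the `k`-element subtuples of `X`. Each conditional mutual
information `I(X_i; X_j | X^a)` is `H(X^{a+i}) + H(X^{a+j}) - H(X^{a+i+j}) - H(X^a)`, and double
counting the triples `(i, j, a)` turns `u_k` into the second difference `2 r_k - r_{k+1} - r_{k-1}`.
Summation by parts with `r_0 = 0` collapses `∑ k u_k` to `n r_{n-1} - (n-1) r_n`, which is the dual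
total correlation because `H(X_j | X^{-j}) = H(X) - H(X^{-j})`.
-/

open Function

section Combinatorics

variable {α M : Type*} [AddCommMonoid M]

theorem sum_filter_lt_add_swap [Fintype α] [LinearOrder α] (f : α × α → M) :
    ∑ p ∈ univ.filter (fun p : α × α => p.1 < p.2), (f p + f p.swap)
      = ∑ i, ∑ j ∈ univ.erase i, f (i, j) := by
  have hswap : ∑ p ∈ univ.filter (fun p : α × α => p.1 < p.2), f p.swap
      = ∑ p ∈ univ.filter (fun p : α × α => p.2 < p.1), f p :=
    sum_nbij' Prod.swap Prod.swap (by simp) (by simp) (by simp) (by simp) (by simp)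
  rw [sum_add_distrib, hswap, ← sum_union (disjoint_filter.2 fun p _ h => lt_asymm h),
    ← filter_or]
  simp_rw [lt_or_lt_iff_ne, sum_filter, Fintype.sum_prod_type, ← filter_ne, sum_filter]

variable [DecidableEq α]

theorem sum_sum_powersetCard_erase (s : Finset α) (m : ℕ) (f : Finset α → M) :
    ∑ j ∈ s, ∑ a ∈ powersetCard m (s.erase j), f a
      = (#s - m) • ∑ a ∈ powersetCard m s, f a := by
  rw [sum_comm' (t' := powersetCard m s) (s' := fun a => s \ a) (by grind), smul_sum]
  refine sum_congr rfl fun a ha => ?_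
  rw [mem_powersetCard] at ha
  rw [sum_const, card_sdiff_of_subset ha.1, ha.2]

theorem sum_sum_powersetCard_erase_insert (s : Finset α) (m : ℕ) (f : Finset α → M) :
    ∑ i ∈ s, ∑ a ∈ powersetCard m (s.erase i), f (insert i a)
      = (m + 1) • ∑ b ∈ powersetCard (m + 1) s, f b := by
  calc ∑ i ∈ s, ∑ a ∈ powersetCard m (s.erase i), f (insert i a)
      = ∑ i ∈ s, ∑ b ∈ powersetCard (m + 1) s with i ∈ b, f b :=
        sum_congr rfl fun i _ => sum_nbij' (insert i) (fun b => b.erase i)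
          (by grind) (by grind) (by grind) (by grind) (by simp)
    _ = ∑ b ∈ powersetCard (m + 1) s, ∑ i ∈ b, f b := by
        rw [sum_comm' (t' := powersetCard (m + 1) s) (s' := fun b => b) (by grind)]
    _ = (m + 1) • ∑ b ∈ powersetCard (m + 1) s, f b := by
        rw [smul_sum]
        refine sum_congr rfl fun b hb => ?_
        rw [sum_const, (mem_powersetCard.1 hb).2]

theorem sum_erase_sum_powersetCard_second_difference [Fintype α] {G : Type*} [AddCommGroup G]
    (E : Finset α → G) (m : ℕ) :
    ∑ i, ∑ j ∈ univ.erase i, ∑ a ∈ powersetCard m ((univ.erase i).erase j),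
        (2 • E (insert i a) - E (insert i (insert j a)) - E a)
      = (2 * (Fintype.card α - 1 - m) * (m + 1)) • ∑ b ∈ powersetCard (m + 1) univ, E b
        - ((m + 2) * (m + 1)) • ∑ b ∈ powersetCard (m + 2) univ, E b
        - ((Fintype.card α - 1 - m) * (Fintype.card α - m)) • ∑ b ∈ powersetCard m univ, E b := by
  have hpair : ∀ i, ∑ j ∈ univ.erase i, ∑ a ∈ powersetCard m ((univ.erase i).erase j),
      E (insert i (insert j a))
        = (m + 1) • ∑ b ∈ powersetCard (m + 1) (univ.erase i), E (insert i b) :=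
    fun i => sum_sum_powersetCard_erase_insert _ _ fun b => E (insert i b)
  simp only [sum_sub_distrib, ← smul_sum, sum_sum_powersetCard_erase, hpair,
    sum_sum_powersetCard_erase_insert, card_erase_of_mem (mem_univ _), card_univ, smul_smul]
  ring_nf

end Combinatorics

theorem inv_choose_mul_choose_two_mul_eq {n m : ℕ} (h : m + 2 ≤ n) {U L₀ L₁ L₂ : ℝ}
    (hU : 2 * U = 2 * ((n - 1 - m) * (m + 1)) * L₁ - (m + 2) * (m + 1) * L₂
      - (n - 1 - m) * (n - m) * L₀) :
    ((n.choose (m + 2) : ℝ) * ((m + 2).choose 2 : ℕ))⁻¹ * U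
      = 2 * ((n.choose (m + 1) : ℝ)⁻¹ * L₁) - (n.choose (m + 2) : ℝ)⁻¹ * L₂
        - (n.choose m : ℝ)⁻¹ * L₀ := by
  have hsucc : ∀ k, k ≤ n → (n.choose (k + 1) : ℝ) = n.choose k * (n - k) / (k + 1) := by
    intro k hk
    rw [eq_div_iff (by positivity)]
    have := congrArg (Nat.cast : ℕ → ℝ) (Nat.choose_succ_right_eq n k)
    push_cast [Nat.cast_sub hk] at this
    exact this
  have hC₀ : (n.choose m : ℝ) ≠ 0 := by exact_mod_cast (Nat.choose_pos (by omega)).ne'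
  have hnm : (n : ℝ) - (m + 1) ≠ 0 := by
    rw [sub_ne_zero]; exact_mod_cast (by omega : n ≠ m + 1)
  have hnm' : (n : ℝ) - m ≠ 0 := by
    rw [sub_ne_zero]; exact_mod_cast (by omega : n ≠ m)
  rw [hsucc (m + 1) (by omega), hsucc m (by omega), Nat.cast_choose_two]
  push_cast
  rw [show (m : ℝ) + 2 - 1 = m + 1 by ring]
  field_simp
  linear_combination (m + 2 : ℝ) * hU

section Entropy

theorem ent_comp_of_injective {α β : Type*} [Fintype α] [Fintype β] (μ : Measure Ω)
    (Z : Ω → α) {f : α → β} (hf : Injective f) : ent μ (f ∘ Z) = ent μ Z := by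
  refine (Fintype.sum_of_injective f hf _ _ (fun y hy => ?_) fun z => ?_).symm
  · have : (f ∘ Z) ⁻¹' {y} = ∅ := by
      ext ω; simpa using fun h => hy ⟨Z ω, h⟩
    simp [this]
  · rw [Set.preimage_comp, ← Set.image_singleton, hf.preimage_image]

variable {n : ℕ}

def restrInsertSplit {S : Type*} (i : Fin n) (a : Finset (Fin n)) :
    ({j // j ∈ insert i a} → S) → S × (a → S) :=
  fun g => (g ⟨i, mem_insert_self i a⟩, fun j => g ⟨j, mem_insert_of_mem j.2⟩)

theorem restrInsertSplit_injective {S : Type*} (i : Fin n) (a : Finset (Fin n)) :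
    Injective (restrInsertSplit (S := S) i a) := by
  intro g g' h
  funext ⟨j, hj⟩
  rcases mem_insert.1 hj with rfl | hj
  · exact congrArg Prod.fst h
  · exact congrFun (congrArg Prod.snd h) ⟨j, hj⟩

variable {S : Type*} [Fintype S]

theorem ent_restr_empty (μ : Measure Ω) [IsProbabilityMeasure μ] (X : Fin n → Ω → S) :
    ent μ (restr X ∅) = 0 := by
  refine sum_eq_zero fun z _ => ?_
  have : restr X ∅ ⁻¹' {z} = Set.univ := by
    ext ω; simpa using funext fun i : (∅ : Finset (Fin n)) => absurd i.2 (notMem_empty _)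
  simp [this]

theorem ent_prod_restr (μ : Measure Ω) (X : Fin n → Ω → S) (i : Fin n) (a : Finset (Fin n)) :
    ent μ (fun ω => (X i ω, restr X a ω)) = ent μ (restr X (insert i a)) :=
  ent_comp_of_injective μ (restr X (insert i a)) (restrInsertSplit_injective i a)

theorem ent_prod_prod_restr (μ : Measure Ω) (X : Fin n → Ω → S) (i j : Fin n)
    (a : Finset (Fin n)) :
    ent μ (fun ω => (X i ω, X j ω, restr X a ω)) = ent μ (restr X (insert i (insert j a))) := by
  rw [← ent_prod_restr μ X i (insert j a)]
  exact ent_comp_of_injective μ (fun ω => (X i ω, restr X (insert j a) ω))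
    (injective_id.prodMap (restrInsertSplit_injective j a))

theorem cmi_restr_eq (μ : Measure Ω) (X : Fin n → Ω → S) (i j : Fin n) (a : Finset (Fin n)) :
    cmi μ (X i) (X j) (restr X a) = ent μ (restr X (insert i a)) + ent μ (restr X (insert j a))
      - ent μ (restr X (insert i (insert j a))) - ent μ (restr X a) := by
  rw [cmi, ent_prod_prod_restr μ X i j a, ent_prod_restr μ X i a, ent_prod_restr μ X j a]

theorem condEnt_restr_compl (μ : Measure Ω) (X : Fin n → Ω → S) (j : Fin n) :
    condEnt μ (X j) (restr X {j}ᶜ) = ent μ (restr X univ) - ent μ (restr X {j}ᶜ) := by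
  rw [condEnt, ent_prod_restr, insert_compl_self]

end Entropy

section LayerSums

variable {n : ℕ} {S : Type*} [Fintype S]

theorem rE_eq_inv_choose_mul_sum (μ : Measure Ω) (X : Fin n → Ω → S) (k : ℕ) :
    rE μ X k = (n.choose k : ℝ)⁻¹ * ∑ b ∈ powersetCard k univ, ent μ (restr X b) := by
  rw [rE, powersetCard_eq_filter]

theorem rE_zero (μ : Measure Ω) [IsProbabilityMeasure μ] (X : Fin n → Ω → S) :
    rE μ X 0 = 0 := by
  simp [rE_eq_inv_choose_mul_sum, ent_restr_empty]

theorem rE_self (μ : Measure Ω) (X : Fin n → Ω → S) : rE μ X n = ent μ (restr X univ) := by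
  have : powersetCard n (univ : Finset (Fin n)) = {univ} := by
    simpa using powersetCard_self (univ : Finset (Fin n))
  simp [rE_eq_inv_choose_mul_sum, this]

theorem natCast_mul_rE_sub_one (μ : Measure Ω) (X : Fin n → Ω → S) (hn : 1 ≤ n) :
    n * rE μ X (n - 1) = ∑ j, ent μ (restr X {j}ᶜ) := by
  have hsingle : ∀ j : Fin n, powersetCard (n - 1) (univ.erase j) = {univ.erase j} := fun j => by
    simpa using powersetCard_self (univ.erase j)
  have hlayer := sum_sum_powersetCard_erase univ (n - 1) fun b => ent μ (restr X b)
  simp only [hsingle, sum_singleton, card_univ, Fintype.card_fin, Nat.sub_sub_self hn,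
    one_smul] at hlayer
  rw [rE_eq_inv_choose_mul_sum, Nat.choose_symm hn, Nat.choose_one_right, ← hlayer,
    mul_inv_cancel_left₀ (by positivity)]
  exact sum_congr rfl fun j _ => congrArg (fun b => ent μ (restr X b)) (compl_singleton j).symm

theorem uI_eq_second_difference_rE (μ : Measure Ω) (X : Fin n → Ω → S) {k : ℕ} (hk : 1 ≤ k)
    (hkn : k + 1 ≤ n) : uI μ X k = 2 * rE μ X k - rE μ X (k + 1) - rE μ X (k - 1) := by
  obtain ⟨m, rfl⟩ : ∃ m, k = m + 1 := ⟨k - 1, by omega⟩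
  set E : Finset (Fin n) → ℝ := fun b => ent μ (restr X b) with hE
  have hsym : 2 * ∑ p ∈ univ.filter (fun p : Fin n × Fin n => p.1 < p.2),
        ∑ a ∈ (univ \ {p.1, p.2}).powerset.filter (fun a : Finset (Fin n) => a.card = m + 1 - 1),
          cmi μ (X p.1) (X p.2) (restr X a)
      = ∑ i, ∑ j ∈ univ.erase i, ∑ a ∈ powersetCard m ((univ.erase i).erase j),
          (2 • E (insert i a) - E (insert i (insert j a)) - E a) := by
    refine Eq.trans ?_ (sum_filter_lt_add_swap fun p =>
      ∑ a ∈ powersetCard m ((univ.erase p.1).erase p.2),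
        (2 • E (insert p.1 a) - E (insert p.1 (insert p.2 a)) - E a))
    rw [mul_sum]
    refine sum_congr rfl fun p _ => ?_
    simp only [Prod.fst_swap, Prod.snd_swap, add_tsub_cancel_right, ← powersetCard_eq_filter,
      sdiff_insert, sdiff_singleton_eq_erase, cmi_restr_eq, mul_sum]
    rw [erase_right_comm, ← sum_add_distrib]
    refine sum_congr rfl fun a _ => ?_
    rw [insert_comm p.2 p.1, hE, nsmul_eq_mul, nsmul_eq_mul]
    ring
  have hcount := sum_erase_sum_powersetCard_second_difference E m
  rw [← hsym, Fintype.card_fin] at hcount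
  simp only [nsmul_eq_mul, Nat.sub_sub] at hcount
  push_cast [Nat.cast_sub (by omega : 1 + m ≤ n), Nat.cast_sub (by omega : m ≤ n)] at hcount
  rw [uI, rE_eq_inv_choose_mul_sum, rE_eq_inv_choose_mul_sum, rE_eq_inv_choose_mul_sum,
    add_tsub_cancel_right]
  exact inv_choose_mul_choose_two_mul_eq hkn (by linear_combination hcount)

end LayerSums

theorem sum_Icc_mul_second_difference (f : ℕ → ℝ) (N : ℕ) :
    ∑ k ∈ Icc 1 N, k * (2 * f k - f (k + 1) - f (k - 1))
      = (N + 1) * f N - N * f (N + 1) - f 0 := by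
  induction N with
  | zero => simp
  | succ N ih =>
    rw [sum_Icc_succ_top (by omega), ih, add_tsub_cancel_right]
    push_cast
    ring

theorem dtc_decomposition_general {Ω S : Type*} [MeasurableSpace Ω]
    [Fintype S]
    {n : ℕ} (hn : 2 ≤ n) (μ : Measure Ω) [IsProbabilityMeasure μ]
    (X : Fin n → Ω → S) :
    ent μ (restr X univ) - (∑ j : Fin n, condEnt μ (X j) (restr X ({j} : Finset (Fin n))ᶜ))
      = ∑ k ∈ Finset.Icc 1 (n - 1), (k : ℝ) * uI μ X k := by
  have hu : ∀ k ∈ Icc 1 (n - 1), (k : ℝ) * uI μ X k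
      = k * (2 * rE μ X k - rE μ X (k + 1) - rE μ X (k - 1)) := fun k hk => by
    rw [uI_eq_second_difference_rE μ X (mem_Icc.1 hk).1 (by grind)]
  rw [sum_congr rfl hu, sum_Icc_mul_second_difference, Nat.sub_add_cancel (by omega), rE_zero,
    rE_self, Nat.cast_pred (by omega), sub_add_cancel, natCast_mul_rE_sub_one μ X (by omega)]
  simp only [condEnt_restr_compl, sum_sub_distrib, sum_const, card_univ, Fintype.card_fin,
    nsmul_eq_mul]
  ring

/-- `DTC(X) = ∑_{k=1}^{n-1} k · u_k(X)`. -/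
theorem dtc_decomposition {Ω S : Type*} [MeasurableSpace Ω]
    [Fintype S] [MeasurableSpace S] [MeasurableSingletonClass S]
    {n : ℕ} (hn : 2 ≤ n) (μ : Measure Ω) [IsProbabilityMeasure μ]
    (X : Fin n → Ω → S) (hX : ∀ i, Measurable (X i)) :
    ent μ (restr X univ) - (∑ j : Fin n, condEnt μ (X j) (restr X ({j} : Finset (Fin n))ᶜ))
      = ∑ k ∈ Finset.Icc 1 (n - 1), (k : ℝ) * uI μ X k :=
  dtc_decomposition_general hn μ X
end
end

section
/- The interaction information decomposes as II(X) = Σ_{k=1}^{n−1} (−1)^{k+1} C(n−2, k−1) · u_k(X). -/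
open MeasureTheory Finset

noncomputable section

variable {Ω : Type*} [MeasurableSpace Ω]

/-! ### Auxiliary lemmas -/

lemma ent_comp {α β : Type*} [Fintype α] [Fintype β] (μ : Measure Ω)
    (Z : Ω → α) (W : Ω → β) (g : α → β) (hg : Function.Injective g)
    (hW : ∀ ω, W ω = g (Z ω)) :
    ent μ W = ent μ Z := by
  have hWe : W = fun ω => g (Z ω) := funext hW
  subst hWe
  classical
  unfold ent
  have h1 : ∀ b ∈ (univ : Finset β), b ∉ univ.image g →
      Real.negMulLog ((μ ((fun ω => g (Z ω)) ⁻¹' {b})).toReal) = 0 := by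
    intro b _ hb
    have : (fun ω => g (Z ω)) ⁻¹' {b} = ∅ := by
      ext ω
      simp only [Set.mem_preimage, Set.mem_singleton_iff, Set.mem_empty_iff_false, iff_false]
      intro h
      exact hb (h ▸ Finset.mem_image_of_mem g (Finset.mem_univ _))
    simp [this]
  rw [← Finset.sum_subset (Finset.subset_univ (univ.image g)) h1,
    Finset.sum_image (fun a _ a' _ h => hg h)]
  refine Finset.sum_congr rfl fun a _ => ?_
  have : (fun ω => g (Z ω)) ⁻¹' {g a} = Z ⁻¹' {a} := by
    ext ω; simp [hg.eq_iff]
  rw [this]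

lemma pair_ent {n : ℕ} {S : Type*} [Fintype S] (μ : Measure Ω) (X : Fin n → Ω → S)
    (i : Fin n) (a : Finset (Fin n)) :
    ent μ (fun ω => (X i ω, restr X a ω)) = ent μ (restr X (insert i a)) := by
  classical
  have hinj : Function.Injective
      (fun (f : {x // x ∈ insert i a} → S) =>
        ((f ⟨i, Finset.mem_insert_self i a⟩,
          fun p : {x // x ∈ a} => f ⟨p.1, Finset.mem_insert_of_mem p.2⟩) :
          S × ({x // x ∈ a} → S))) := by
    intro f f' h
    simp only [Prod.mk.injEq] at h
    funext p
    rcases Finset.mem_insert.mp p.2 with hp | hp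
    · have hpe : p = ⟨i, Finset.mem_insert_self i a⟩ := Subtype.ext hp
      rw [hpe]; exact h.1
    · exact congrFun h.2 ⟨p.1, hp⟩
  exact ent_comp μ (restr X (insert i a)) _ _ hinj (fun ω => rfl)

lemma triple_ent {n : ℕ} {S : Type*} [Fintype S] (μ : Measure Ω) (X : Fin n → Ω → S)
    (i j : Fin n) (a : Finset (Fin n)) :
    ent μ (fun ω => (X i ω, X j ω, restr X a ω)) =
      ent μ (restr X (insert i (insert j a))) := by
  classical
  have hinj : Function.Injective
      (fun (f : {x // x ∈ insert i (insert j a)} → S) =>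
        ((f ⟨i, Finset.mem_insert_self i _⟩,
          f ⟨j, Finset.mem_insert_of_mem (Finset.mem_insert_self j a)⟩,
          fun p : {x // x ∈ a} => f ⟨p.1,
            Finset.mem_insert_of_mem (Finset.mem_insert_of_mem p.2)⟩) :
          S × S × ({x // x ∈ a} → S))) := by
    intro f f' h
    simp only [Prod.mk.injEq] at h
    funext p
    rcases Finset.mem_insert.mp p.2 with hp | hp
    · have hpe : p = ⟨i, Finset.mem_insert_self i _⟩ := Subtype.ext hp
      rw [hpe]; exact h.1
    · rcases Finset.mem_insert.mp hp with hp' | hp'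
      · have hpe : p = ⟨j, Finset.mem_insert_of_mem (Finset.mem_insert_self j a)⟩ :=
          Subtype.ext hp'
        rw [hpe]; exact h.2.1
      · exact congrFun h.2.2 ⟨p.1, hp'⟩
  exact ent_comp μ (restr X (insert i (insert j a))) _ _ hinj (fun ω => rfl)

lemma cmi_restr {n : ℕ} {S : Type*} [Fintype S] (μ : Measure Ω) (X : Fin n → Ω → S)
    (i j : Fin n) (a : Finset (Fin n)) :
    cmi μ (X i) (X j) (restr X a) =
      ent μ (restr X (insert i a)) + ent μ (restr X (insert j a))
        - ent μ (restr X (insert i (insert j a))) - ent μ (restr X a) := by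
  unfold cmi
  rw [pair_ent, pair_ent, triple_ent]

section CountLemmas

variable {n k : ℕ}

lemma memAk {p : Fin n × Fin n} {a : Finset (Fin n)} :
    a ∈ (univ \ ({p.1, p.2} : Finset (Fin n))).powerset.filter
        (fun a : Finset (Fin n) => a.card = k - 1)
      ↔ p.1 ∉ a ∧ p.2 ∉ a ∧ a.card = k - 1 := by
  simp only [Finset.mem_filter, Finset.mem_powerset, Finset.subset_sdiff,
    Finset.disjoint_insert_right, Finset.disjoint_singleton_right, Finset.subset_univ,
    true_and]
  tauto

lemma count0 (F : Finset (Fin n) → ℝ) :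
    ∑ p ∈ univ.filter (fun p : Fin n × Fin n => p.1 ≠ p.2),
      ∑ a ∈ (univ \ ({p.1, p.2} : Finset (Fin n))).powerset.filter
        (fun a : Finset (Fin n) => a.card = k - 1), F a
    = ((n - (k-1)) * (n - (k-1) - 1) : ℕ) • ∑ a ∈ powersetCard (k-1) (univ : Finset (Fin n)), F a := by
  rw [Finset.sum_comm' (s' := fun a : Finset (Fin n) => aᶜ.offDiag)
    (t' := powersetCard (k-1) (univ : Finset (Fin n)))]
  · rw [Finset.smul_sum]
    refine Finset.sum_congr rfl fun a ha => ?_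
    rw [Finset.sum_const]
    congr 1
    rw [Finset.offDiag_card, Finset.card_compl, Fintype.card_fin,
      (Finset.mem_powersetCard_univ.mp ha)]
    exact (Nat.mul_pred _ _).symm
  · intro p a
    simp only [Finset.mem_filter, Finset.mem_univ, true_and,
      Finset.mem_offDiag, Finset.mem_compl, Finset.mem_powersetCard_univ,
      Finset.mem_powerset, Finset.subset_sdiff, Finset.disjoint_insert_right,
      Finset.disjoint_singleton_right, Finset.subset_univ]
    tauto

lemma count2 (hk : 1 ≤ k) (F : Finset (Fin n) → ℝ) :
    ∑ p ∈ univ.filter (fun p : Fin n × Fin n => p.1 ≠ p.2),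
      ∑ a ∈ (univ \ ({p.1, p.2} : Finset (Fin n))).powerset.filter
        (fun a : Finset (Fin n) => a.card = k - 1), F (insert p.1 a)
    = (k * (n - k) : ℕ) • ∑ c ∈ powersetCard k (univ : Finset (Fin n)), F c := by
  have step1 : ∀ p ∈ univ.filter (fun p : Fin n × Fin n => p.1 ≠ p.2),
      ∑ a ∈ (univ \ ({p.1, p.2} : Finset (Fin n))).powerset.filter
        (fun a : Finset (Fin n) => a.card = k - 1), F (insert p.1 a)
      = ∑ c ∈ (powersetCard k (univ : Finset (Fin n))).filter
          (fun c => p.1 ∈ c ∧ p.2 ∉ c), F c := by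
    intro p hp
    have hne : p.1 ≠ p.2 := (Finset.mem_filter.mp hp).2
    refine Finset.sum_nbij' (fun a => insert p.1 a) (fun c => c.erase p.1) ?_ ?_ ?_ ?_ ?_
    · intro a ha
      obtain ⟨h1, h2, h3⟩ := memAk.mp ha
      simp only [Finset.mem_filter, Finset.mem_powersetCard_univ]
      refine ⟨?_, Finset.mem_insert_self _ _, ?_⟩
      · rw [Finset.card_insert_of_notMem h1, h3]; omega
      · simp only [Finset.mem_insert]
        push_neg
        exact ⟨hne.symm, h2⟩
    · intro c hc
      obtain ⟨hcard, h1, h2⟩ := by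
        simpa only [Finset.mem_filter, Finset.mem_powersetCard_univ, and_assoc] using hc
      refine memAk.mpr ⟨Finset.notMem_erase _ _, ?_, ?_⟩
      · simp only [Finset.mem_erase]; tauto
      · rw [Finset.card_erase_of_mem h1, hcard]
    · intro a ha
      exact Finset.erase_insert (memAk.mp ha).1
    · intro c hc
      obtain ⟨hcard, h1, h2⟩ := by
        simpa only [Finset.mem_filter, Finset.mem_powersetCard_univ, and_assoc] using hc
      exact Finset.insert_erase h1
    · intro a _; rfl
  rw [Finset.sum_congr rfl step1]
  rw [Finset.sum_comm' (s' := fun c : Finset (Fin n) => c ×ˢ cᶜ)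
    (t' := powersetCard k (univ : Finset (Fin n)))]
  · rw [Finset.smul_sum]
    refine Finset.sum_congr rfl fun c hc => ?_
    rw [Finset.sum_const]
    congr 1
    rw [Finset.card_product, Finset.card_compl, Fintype.card_fin,
      (Finset.mem_powersetCard_univ.mp hc)]
  · intro p c
    simp only [Finset.mem_filter, Finset.mem_univ, true_and,
      Finset.mem_powersetCard_univ, Finset.mem_product, Finset.mem_compl]
    constructor
    · rintro ⟨hne, h1, h2, h3⟩; exact ⟨⟨h2, h3⟩, h1⟩
    · rintro ⟨⟨h2, h3⟩, h1⟩; exact ⟨fun he => h3 (he ▸ h2), h1, h2, h3⟩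

lemma count3 (hk : 1 ≤ k) (F : Finset (Fin n) → ℝ) :
    ∑ p ∈ univ.filter (fun p : Fin n × Fin n => p.1 ≠ p.2),
      ∑ a ∈ (univ \ ({p.1, p.2} : Finset (Fin n))).powerset.filter
        (fun a : Finset (Fin n) => a.card = k - 1), F (insert p.1 (insert p.2 a))
    = ((k+1) * k : ℕ) • ∑ b ∈ powersetCard (k+1) (univ : Finset (Fin n)), F b := by
  have step1 : ∀ p ∈ univ.filter (fun p : Fin n × Fin n => p.1 ≠ p.2),
      ∑ a ∈ (univ \ ({p.1, p.2} : Finset (Fin n))).powerset.filter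
        (fun a : Finset (Fin n) => a.card = k - 1), F (insert p.1 (insert p.2 a))
      = ∑ b ∈ (powersetCard (k+1) (univ : Finset (Fin n))).filter
          (fun b => p.1 ∈ b ∧ p.2 ∈ b), F b := by
    intro p hp
    have hne : p.1 ≠ p.2 := (Finset.mem_filter.mp hp).2
    refine Finset.sum_nbij' (fun a => insert p.1 (insert p.2 a))
      (fun b => (b.erase p.1).erase p.2) ?_ ?_ ?_ ?_ ?_
    · intro a ha
      obtain ⟨h1, h2, h3⟩ := memAk.mp ha
      have hp1 : p.1 ∉ insert p.2 a := by
        simp only [Finset.mem_insert]; push_neg; exact ⟨hne, h1⟩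
      simp only [Finset.mem_filter, Finset.mem_powersetCard_univ]
      refine ⟨?_, Finset.mem_insert_self _ _,
        Finset.mem_insert_of_mem (Finset.mem_insert_self _ _)⟩
      rw [Finset.card_insert_of_notMem hp1, Finset.card_insert_of_notMem h2, h3]
      omega
    · intro b hb
      obtain ⟨hcard, h1, h2⟩ := by
        simpa only [Finset.mem_filter, Finset.mem_powersetCard_univ, and_assoc] using hb
      have h2' : p.2 ∈ b.erase p.1 := Finset.mem_erase.mpr ⟨hne.symm, h2⟩
      refine memAk.mpr ⟨?_, Finset.notMem_erase _ _, ?_⟩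
      · intro h
        exact Finset.notMem_erase p.1 b (Finset.mem_of_mem_erase h)
      · rw [Finset.card_erase_of_mem h2', Finset.card_erase_of_mem h1, hcard]
        omega
    · intro a ha
      obtain ⟨h1, h2, h3⟩ := memAk.mp ha
      have hp1 : p.1 ∉ insert p.2 a := by
        simp only [Finset.mem_insert]; push_neg; exact ⟨hne, h1⟩
      show ((insert p.1 (insert p.2 a)).erase p.1).erase p.2 = a
      rw [Finset.erase_insert hp1, Finset.erase_insert h2]
    · intro b hb
      obtain ⟨hcard, h1, h2⟩ := by
        simpa only [Finset.mem_filter, Finset.mem_powersetCard_univ, and_assoc] using hb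
      have h2' : p.2 ∈ b.erase p.1 := Finset.mem_erase.mpr ⟨hne.symm, h2⟩
      show insert p.1 (insert p.2 ((b.erase p.1).erase p.2)) = b
      rw [Finset.insert_erase h2', Finset.insert_erase h1]
    · intro a _; rfl
  rw [Finset.sum_congr rfl step1]
  rw [Finset.sum_comm' (s' := fun b : Finset (Fin n) => b.offDiag)
    (t' := powersetCard (k+1) (univ : Finset (Fin n)))]
  · rw [Finset.smul_sum]
    refine Finset.sum_congr rfl fun b hb => ?_
    rw [Finset.sum_const]
    congr 1
    rw [Finset.offDiag_card, (Finset.mem_powersetCard_univ.mp hb)]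
    exact (Nat.mul_pred _ _).symm
  · intro p b
    simp only [Finset.mem_filter, Finset.mem_univ, true_and,
      Finset.mem_powersetCard_univ, Finset.mem_offDiag]
    tauto

lemma sum_swap_ne (g : Fin n × Fin n → ℝ) :
    ∑ p ∈ univ.filter (fun p : Fin n × Fin n => p.1 ≠ p.2), g p
      = ∑ p ∈ univ.filter (fun p : Fin n × Fin n => p.1 ≠ p.2), g p.swap := by
  refine Finset.sum_nbij' Prod.swap Prod.swap ?_ ?_ ?_ ?_ ?_
  · intro p hp
    simp only [Finset.mem_filter, Finset.mem_univ, true_and] at hp ⊢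
    exact hp.symm
  · intro p hp
    simp only [Finset.mem_filter, Finset.mem_univ, true_and] at hp ⊢
    exact hp.symm
  · intro p _; rfl
  · intro p _; rfl
  · intro p _; rfl

lemma half_sum (g : Fin n × Fin n → ℝ) (hg : ∀ p, g p.swap = g p) :
    ∑ p ∈ univ.filter (fun p : Fin n × Fin n => p.1 < p.2), g p
      = (1/2) * ∑ p ∈ univ.filter (fun p : Fin n × Fin n => p.1 ≠ p.2), g p := by
  have h1 : (univ.filter (fun p : Fin n × Fin n => p.1 ≠ p.2)).filter
      (fun p => p.1 < p.2) = univ.filter (fun p : Fin n × Fin n => p.1 < p.2) := by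
    rw [Finset.filter_filter]
    apply Finset.filter_congr
    intro p _
    constructor
    · exact fun h => h.2
    · exact fun h => ⟨ne_of_lt h, h⟩
  have h2 : (univ.filter (fun p : Fin n × Fin n => p.1 ≠ p.2)).filter
      (fun p => ¬ p.1 < p.2) = univ.filter (fun p : Fin n × Fin n => p.2 < p.1) := by
    rw [Finset.filter_filter]
    apply Finset.filter_congr
    intro p _
    constructor
    · exact fun h => lt_of_le_of_ne (not_lt.mp h.2) h.1.symm
    · exact fun h => ⟨(ne_of_lt h).symm, not_lt.mpr (le_of_lt h)⟩
  have h3 : ∑ p ∈ univ.filter (fun p : Fin n × Fin n => p.2 < p.1), g p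
      = ∑ p ∈ univ.filter (fun p : Fin n × Fin n => p.1 < p.2), g p := by
    refine Finset.sum_nbij' Prod.swap Prod.swap ?_ ?_ ?_ ?_ ?_ <;>
      intro p hp <;>
      simp only [Finset.mem_filter, Finset.mem_univ, true_and, Prod.fst_swap,
        Prod.snd_swap] at hp ⊢
    · exact hp
    · exact hp
    · rfl
    · rfl
    · exact (hg p).symm
  have key := Finset.sum_filter_add_sum_filter_not
    (univ.filter (fun p : Fin n × Fin n => p.1 ≠ p.2)) (fun p => p.1 < p.2) g
  rw [h1, h2, h3] at key
  linarith

end CountLemmas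

lemma icc_shift (a b : ℕ) (g : ℕ → ℝ) :
    ∑ j ∈ Icc (a+1) (b+1), g j = ∑ k ∈ Icc a b, g (k+1) := by
  rw [← Finset.map_add_right_Icc a b 1, Finset.sum_map]
  rfl

lemma telescope (S : ℕ → ℝ) (hS0 : S 0 = 0) {n : ℕ} (hn : 2 ≤ n) :
    ∑ k ∈ Icc 1 (n-1), (-1:ℝ)^(k+1) *
      (2*(k:ℝ)*((n:ℝ)-(k:ℝ)) * S k - ((k:ℝ)+1)*(k:ℝ) * S (k+1)
        - ((n:ℝ)-(k:ℝ)+1)*((n:ℝ)-(k:ℝ)) * S (k-1))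
    = (n:ℝ)*((n:ℝ)-1) * ∑ k ∈ Icc 1 n, (-1:ℝ)^(k+1) * S k := by
  obtain ⟨m, rfl⟩ : ∃ m, n = m + 2 := ⟨n - 2, by omega⟩
  have hm1 : m + 2 - 1 = m + 1 := rfl
  rw [hm1]
  set N : ℝ := ((m : ℝ) + 2) with hN
  have hNcast : ((m + 2 : ℕ) : ℝ) = N := by push_cast [hN]; ring
  rw [hNcast]
  -- the three pieces
  set fA : ℕ → ℝ := fun k => (-1:ℝ)^(k+1) * (2*(k:ℝ)*(N-(k:ℝ))) * S k with hfA
  set gB : ℕ → ℝ := fun j => (-1:ℝ)^j * ((j:ℝ) * ((j:ℝ)-1)) * S j with hgB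
  set gC : ℕ → ℝ := fun j => (-1:ℝ)^j * ((N-(j:ℝ)) * (N-(j:ℝ)-1)) * S j with hgC
  have split : ∑ k ∈ Icc 1 (m+1), (-1:ℝ)^(k+1) *
      (2*(k:ℝ)*(N-(k:ℝ)) * S k - ((k:ℝ)+1)*(k:ℝ) * S (k+1)
        - (N-(k:ℝ)+1)*(N-(k:ℝ)) * S (k-1))
      = (∑ k ∈ Icc 1 (m+1), fA k)
        - (∑ k ∈ Icc 1 (m+1), (-1:ℝ)^(k+1) * (((k:ℝ)+1)*(k:ℝ)) * S (k+1))
        - (∑ k ∈ Icc 1 (m+1), (-1:ℝ)^(k+1) * ((N-(k:ℝ)+1)*(N-(k:ℝ))) * S (k-1)) := by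
    rw [← Finset.sum_sub_distrib, ← Finset.sum_sub_distrib]
    refine Finset.sum_congr rfl fun k _ => ?_
    simp only [hfA]
    ring
  rw [split]
  -- piece A : extend to Icc 1 (m+2)
  have hA : ∑ k ∈ Icc 1 (m+1), fA k = ∑ k ∈ Icc 1 (m+2), fA k := by
    conv_rhs => rw [Finset.sum_Icc_succ_top (a := 1) (b := m+1) (by omega) fA]
    have : fA (m+2) = 0 := by
      simp only [hfA, hN]; push_cast; ring
    rw [this, add_zero]
  -- piece B
  have hB : ∑ k ∈ Icc 1 (m+1), (-1:ℝ)^(k+1) * (((k:ℝ)+1)*(k:ℝ)) * S (k+1)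
      = ∑ j ∈ Icc 1 (m+2), gB j := by
    have e1 : ∑ j ∈ Icc 2 (m+2), gB j = ∑ k ∈ Icc 1 (m+1), gB (k+1) := icc_shift 1 (m+1) gB
    have e2 : ∀ k : ℕ, gB (k+1) = (-1:ℝ)^(k+1) * (((k:ℝ)+1)*(k:ℝ)) * S (k+1) := by
      intro k; simp only [hgB]; push_cast; ring
    have e3 : ∑ j ∈ Icc 1 (m+2), gB j = gB 1 + ∑ j ∈ Icc 2 (m+2), gB j := by
      rw [Finset.Icc_eq_cons_Ioc (show (1:ℕ) ≤ m+2 by omega), Finset.sum_cons,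
        show Ioc 1 (m+2) = Icc 2 (m+2) from by
          ext x; simp only [Finset.mem_Ioc, Finset.mem_Icc]; omega]
    have e4 : gB 1 = 0 := by simp only [hgB]; push_cast; ring
    rw [e3, e4, zero_add, e1]
    exact (Finset.sum_congr rfl fun k _ => (e2 k)).symm
  -- piece C
  have hC : ∑ k ∈ Icc 1 (m+1), (-1:ℝ)^(k+1) * ((N-(k:ℝ)+1)*(N-(k:ℝ))) * S (k-1)
      = ∑ j ∈ Icc 1 (m+2), gC j := by
    have e1 : ∑ k ∈ Icc 1 (m+1), (-1:ℝ)^(k+1) * ((N-(k:ℝ)+1)*(N-(k:ℝ))) * S (k-1)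
        = ∑ j ∈ Icc 0 m, gC j := by
      rw [icc_shift 0 m]
      refine Finset.sum_congr rfl fun j _ => ?_
      simp only [hgC, Nat.add_sub_cancel]
      push_cast
      ring
    have e2 : ∑ j ∈ Icc 0 m, gC j = gC 0 + ∑ j ∈ Icc 1 m, gC j := by
      rw [Finset.Icc_eq_cons_Ioc (show (0:ℕ) ≤ m by omega), Finset.sum_cons,
        show Ioc 0 m = Icc 1 m from by
          ext x; simp only [Finset.mem_Ioc, Finset.mem_Icc]; omega]
    have e3 : gC 0 = 0 := by simp only [hgC]; rw [hS0]; ring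
    have e4 : ∑ j ∈ Icc 1 m, gC j = ∑ j ∈ Icc 1 (m+2), gC j := by
      apply Finset.sum_subset
      · intro x hx; simp only [Finset.mem_Icc] at hx ⊢; omega
      · intro j hj hj'
        simp only [Finset.mem_Icc] at hj hj'
        have : j = m + 1 ∨ j = m + 2 := by omega
        rcases this with rfl | rfl
        · simp only [hgC, hN]; push_cast; ring
        · simp only [hgC, hN]; push_cast; ring
    rw [e1, e2, e3, zero_add, e4]
  rw [hA, hB, hC, ← Finset.sum_sub_distrib, ← Finset.sum_sub_distrib, Finset.mul_sum]
  refine Finset.sum_congr rfl fun k _ => ?_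
  simp only [hfA, hgB, hgC]
  ring

lemma choose_id {n k : ℕ} (hn : 2 ≤ n) (hk1 : 1 ≤ k) (hk2 : k ≤ n - 1) :
    n * (n-1) * ((n-2).choose (k-1)) = 2 * (n.choose (k+1) * (k+1).choose 2) := by
  have h1 : (n-1) * ((n-2).choose (k-1)) = (n-1).choose k * k := by
    have := Nat.add_one_mul_choose_eq (n-2) (k-1)
    have e1 : n - 2 + 1 = n - 1 := by omega
    have e2 : k - 1 + 1 = k := by omega
    rw [e1, e2] at this
    exact this
  have h2 : n * ((n-1).choose k) = n.choose (k+1) * (k+1) := by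
    have := Nat.add_one_mul_choose_eq (n-1) k
    have e1 : n - 1 + 1 = n := by omega
    rw [e1] at this
    exact this
  have h3 : 2 * ((k+1).choose 2) = (k+1) * k := by
    rw [Nat.choose_two_right]
    rw [Nat.add_sub_cancel]
    exact Nat.mul_div_cancel' (by rw [mul_comm]; exact (Nat.even_mul_succ_self k).two_dvd)
  calc n * (n-1) * ((n-2).choose (k-1)) = n * ((n-1) * ((n-2).choose (k-1))) := by ring
    _ = n * ((n-1).choose k * k) := by rw [h1]
    _ = (n * ((n-1).choose k)) * k := by ring
    _ = (n.choose (k+1) * (k+1)) * k := by rw [h2]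
    _ = n.choose (k+1) * ((k+1) * k) := by ring
    _ = n.choose (k+1) * (2 * ((k+1).choose 2)) := by rw [h3]
    _ = 2 * (n.choose (k+1) * (k+1).choose 2) := by ring

/-- The unnormalized subset-entropy sum `∑_{|a| = m} H(X^a)`. -/
def SSe {n : ℕ} {S : Type*} [Fintype S] (μ : Measure Ω) (X : Fin n → Ω → S) (m : ℕ) : ℝ :=
  ∑ a ∈ powersetCard m (univ : Finset (Fin n)), ent μ (restr X a)

lemma SSe_eq_filter {n : ℕ} {S : Type*} [Fintype S] (μ : Measure Ω) (X : Fin n → Ω → S)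
    (m : ℕ) :
    SSe μ X m = ∑ a ∈ univ.powerset.filter (fun a : Finset (Fin n) => a.card = m),
      ent μ (restr X a) := by
  rw [SSe, Finset.powersetCard_eq_filter]

lemma perk {n : ℕ} {S : Type*} [Fintype S] (μ : Measure Ω) (X : Fin n → Ω → S)
    (hn : 2 ≤ n) {k : ℕ} (hk1 : 1 ≤ k) (hk2 : k ≤ n - 1) :
    (-1:ℝ)^(k+1) * ((n - 2).choose (k - 1) : ℝ) * uI μ X k
      = ((n:ℝ)*((n:ℝ)-1))⁻¹ * ((-1:ℝ)^(k+1) *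
          (2*(k:ℝ)*((n:ℝ)-(k:ℝ)) * SSe μ X k - ((k:ℝ)+1)*(k:ℝ) * SSe μ X (k+1)
            - ((n:ℝ)-(k:ℝ)+1)*((n:ℝ)-(k:ℝ)) * SSe μ X (k-1))) := by
  classical
  have hkn : k ≤ n := by omega
  have hk1n : k + 1 ≤ n := by omega
  have hg : ∀ p : Fin n × Fin n,
      (∑ a ∈ (univ \ ({p.swap.1, p.swap.2} : Finset (Fin n))).powerset.filter
          (fun a : Finset (Fin n) => a.card = k - 1),
        cmi μ (X p.swap.1) (X p.swap.2) (restr X a))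
      = ∑ a ∈ (univ \ ({p.1, p.2} : Finset (Fin n))).powerset.filter
          (fun a : Finset (Fin n) => a.card = k - 1),
        cmi μ (X p.1) (X p.2) (restr X a) := by
    intro p
    simp only [Prod.fst_swap, Prod.snd_swap]
    rw [Finset.pair_comm p.2 p.1]
    refine Finset.sum_congr rfl fun a _ => ?_
    rw [cmi_restr, cmi_restr, Finset.insert_comm]
    ring
  have h0 : (∑ p ∈ univ.filter (fun p : Fin n × Fin n => p.1 < p.2),
      ∑ a ∈ (univ \ ({p.1, p.2} : Finset (Fin n))).powerset.filter
          (fun a : Finset (Fin n) => a.card = k - 1),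
        cmi μ (X p.1) (X p.2) (restr X a))
      = (1/2) * ∑ p ∈ univ.filter (fun p : Fin n × Fin n => p.1 ≠ p.2),
          ∑ a ∈ (univ \ ({p.1, p.2} : Finset (Fin n))).powerset.filter
              (fun a : Finset (Fin n) => a.card = k - 1),
            cmi μ (X p.1) (X p.2) (restr X a) :=
    half_sum _ hg
  have h1 : (∑ p ∈ univ.filter (fun p : Fin n × Fin n => p.1 ≠ p.2),
      ∑ a ∈ (univ \ ({p.1, p.2} : Finset (Fin n))).powerset.filter
          (fun a : Finset (Fin n) => a.card = k - 1),
        cmi μ (X p.1) (X p.2) (restr X a))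
      = ((∑ p ∈ univ.filter (fun p : Fin n × Fin n => p.1 ≠ p.2),
          ∑ a ∈ (univ \ ({p.1, p.2} : Finset (Fin n))).powerset.filter
              (fun a : Finset (Fin n) => a.card = k - 1),
            ent μ (restr X (insert p.1 a)))
        + (∑ p ∈ univ.filter (fun p : Fin n × Fin n => p.1 ≠ p.2),
          ∑ a ∈ (univ \ ({p.1, p.2} : Finset (Fin n))).powerset.filter
              (fun a : Finset (Fin n) => a.card = k - 1),
            ent μ (restr X (insert p.2 a)))
        - (∑ p ∈ univ.filter (fun p : Fin n × Fin n => p.1 ≠ p.2),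
          ∑ a ∈ (univ \ ({p.1, p.2} : Finset (Fin n))).powerset.filter
              (fun a : Finset (Fin n) => a.card = k - 1),
            ent μ (restr X (insert p.1 (insert p.2 a))))
        - (∑ p ∈ univ.filter (fun p : Fin n × Fin n => p.1 ≠ p.2),
          ∑ a ∈ (univ \ ({p.1, p.2} : Finset (Fin n))).powerset.filter
              (fun a : Finset (Fin n) => a.card = k - 1),
            ent μ (restr X a))) := by
    rw [← Finset.sum_add_distrib, ← Finset.sum_sub_distrib, ← Finset.sum_sub_distrib]
    refine Finset.sum_congr rfl fun p _ => ?_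
    rw [← Finset.sum_add_distrib, ← Finset.sum_sub_distrib, ← Finset.sum_sub_distrib]
    exact Finset.sum_congr rfl fun a _ => cmi_restr μ X p.1 p.2 a
  have hD2 : (∑ p ∈ univ.filter (fun p : Fin n × Fin n => p.1 ≠ p.2),
      ∑ a ∈ (univ \ ({p.1, p.2} : Finset (Fin n))).powerset.filter
          (fun a : Finset (Fin n) => a.card = k - 1),
        ent μ (restr X (insert p.2 a)))
      = ∑ p ∈ univ.filter (fun p : Fin n × Fin n => p.1 ≠ p.2),
        ∑ a ∈ (univ \ ({p.1, p.2} : Finset (Fin n))).powerset.filter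
            (fun a : Finset (Fin n) => a.card = k - 1),
          ent μ (restr X (insert p.1 a)) := by
    rw [sum_swap_ne]
    refine Finset.sum_congr rfl fun p _ => ?_
    simp only [Prod.fst_swap, Prod.snd_swap]
    rw [Finset.pair_comm p.2 p.1]
  have c2 : ((k * (n - k) : ℕ) : ℝ) = (k:ℝ) * ((n:ℝ) - (k:ℝ)) := by
    rw [Nat.cast_mul, Nat.cast_sub hkn]
  have c3 : (((k+1) * k : ℕ) : ℝ) = ((k:ℝ)+1) * (k:ℝ) := by push_cast; ring
  have c0 : (((n - (k-1)) * (n - (k-1) - 1) : ℕ) : ℝ)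
      = ((n:ℝ)-(k:ℝ)+1) * ((n:ℝ)-(k:ℝ)) := by
    have e1 : n - (k-1) = n - k + 1 := by omega
    have e2 : n - (k-1) - 1 = n - k := by omega
    rw [e2, e1, Nat.cast_mul, Nat.cast_add, Nat.cast_sub hkn, Nat.cast_one]
  have hval : (∑ p ∈ univ.filter (fun p : Fin n × Fin n => p.1 < p.2),
      ∑ a ∈ (univ \ ({p.1, p.2} : Finset (Fin n))).powerset.filter
          (fun a : Finset (Fin n) => a.card = k - 1),
        cmi μ (X p.1) (X p.2) (restr X a))
      = (1/2) * (2*(k:ℝ)*((n:ℝ)-(k:ℝ)) * SSe μ X k - ((k:ℝ)+1)*(k:ℝ) * SSe μ X (k+1)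
          - ((n:ℝ)-(k:ℝ)+1)*((n:ℝ)-(k:ℝ)) * SSe μ X (k-1)) := by
    rw [h0, h1, hD2, count2 hk1 (fun a => ent μ (restr X a)),
      count3 hk1 (fun a => ent μ (restr X a)), count0 (fun a => ent μ (restr X a))]
    simp only [SSe, nsmul_eq_mul]
    rw [c2, c3, c0]
    ring
  have hCA : ((n.choose (k+1) : ℕ) : ℝ) ≠ 0 :=
    Nat.cast_ne_zero.mpr (Nat.choose_pos hk1n).ne'
  have hCB : (((k+1).choose 2 : ℕ) : ℝ) ≠ 0 :=
    Nat.cast_ne_zero.mpr (Nat.choose_pos (by omega : 2 ≤ k + 1)).ne'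
  have hNn : (n:ℝ) * ((n:ℝ)-1) ≠ 0 := by
    have h2n : (2:ℝ) ≤ (n:ℝ) := by exact_mod_cast hn
    have hz1 : (n:ℝ) ≠ 0 := by linarith
    have hz2 : (n:ℝ) - 1 ≠ 0 := by intro h; linarith
    exact mul_ne_zero hz1 hz2
  have hcc : (n:ℝ) * ((n:ℝ)-1) * (((n-2).choose (k-1) : ℕ) : ℝ)
      = 2 * (((n.choose (k+1) : ℕ) : ℝ) * (((k+1).choose 2 : ℕ) : ℝ)) := by
    have hnat := choose_id hn hk1 hk2
    have hc : ((n * (n-1) * ((n-2).choose (k-1)) : ℕ) : ℝ)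
        = ((2 * (n.choose (k+1) * (k+1).choose 2) : ℕ) : ℝ) := by exact_mod_cast hnat
    push_cast [Nat.cast_sub (show 1 ≤ n by omega)] at hc
    linarith [hc]
  have hCfrac : (((n-2).choose (k-1) : ℕ) : ℝ)
      = 2 * (((n.choose (k+1) : ℕ) : ℝ) * (((k+1).choose 2 : ℕ) : ℝ))
          / ((n:ℝ) * ((n:ℝ)-1)) := by
    rw [eq_div_iff hNn]
    linarith [hcc]
  unfold uI
  rw [hval, hCfrac]
  field_simp

/-- `II(X) = ∑_{k=1}^{n-1} (−1)^{k+1} C(n−2, k−1) u_k(X)`. -/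
theorem ii_decomposition {Ω S : Type*} [MeasurableSpace Ω]
    [Fintype S] [MeasurableSpace S] [MeasurableSingletonClass S]
    {n : ℕ} (hn : 2 ≤ n) (μ : Measure Ω) [IsProbabilityMeasure μ]
    (X : Fin n → Ω → S) (hX : ∀ i, Measurable (X i)) :
    (∑ k ∈ Finset.Icc 1 n, (-1 : ℝ) ^ (k + 1) *
        ∑ a ∈ univ.powerset.filter (fun a : Finset (Fin n) => a.card = k), ent μ (restr X a))
      = ∑ k ∈ Finset.Icc 1 (n - 1),
          (-1 : ℝ) ^ (k + 1) * ((n - 2).choose (k - 1) : ℝ) * uI μ X k := by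
  have hS0 : SSe μ X 0 = 0 := by
    rw [SSe, Finset.powersetCard_zero, Finset.sum_singleton]
    unfold ent
    apply Finset.sum_eq_zero
    intro z _
    have hpre : (restr X (∅ : Finset (Fin n))) ⁻¹' {z} = Set.univ := by
      ext ω
      simp only [Set.mem_preimage, Set.mem_singleton_iff, Set.mem_univ, iff_true]
      funext p
      exact absurd p.2 (Finset.notMem_empty _)
    rw [hpre, measure_univ]
    simp [Real.negMulLog_one]
  have hNn : (n:ℝ) * ((n:ℝ)-1) ≠ 0 := by
    have h2n : (2:ℝ) ≤ (n:ℝ) := by exact_mod_cast hn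
    have hz1 : (n:ℝ) ≠ 0 := by linarith
    have hz2 : (n:ℝ) - 1 ≠ 0 := by intro h; linarith
    exact mul_ne_zero hz1 hz2
  have hrhs : (∑ k ∈ Finset.Icc 1 (n - 1),
      (-1 : ℝ) ^ (k + 1) * ((n - 2).choose (k - 1) : ℝ) * uI μ X k)
      = ((n:ℝ)*((n:ℝ)-1))⁻¹ * ∑ k ∈ Finset.Icc 1 (n-1), (-1:ℝ)^(k+1) *
          (2*(k:ℝ)*((n:ℝ)-(k:ℝ)) * SSe μ X k - ((k:ℝ)+1)*(k:ℝ) * SSe μ X (k+1)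
            - ((n:ℝ)-(k:ℝ)+1)*((n:ℝ)-(k:ℝ)) * SSe μ X (k-1)) := by
    rw [Finset.mul_sum]
    refine Finset.sum_congr rfl fun k hk => ?_
    rw [Finset.mem_Icc] at hk
    exact perk μ X hn hk.1 hk.2
  rw [hrhs, telescope (SSe μ X) hS0 hn, ← mul_assoc, inv_mul_cancel₀ hNn, one_mul]
  refine Finset.sum_congr rfl fun k _ => ?_
  rw [SSe_eq_filter]
end
end
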